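/- arXiv:math/0105206 — 5 statements merged into one kernel-verified Lean document; each statement's English description precedes it below -/
import Mathlib

section
/- Let V be a real inner product space and I, J, K orthogonal endomorphisms of V satisfying the quaternionic identities I² = J² = K² = -1 = IJK. Define the operator L on bilinear forms on V by L(Φ)(X,Y) = Φ(IX,IY) + Φ(JX,JY) + Φ(KX,KY). Then L² = 2L + 3·Id. -/
/-- The operator `L` on bilinear forms: `(L Φ)(X,Y) = Φ(IX,IY) + Φ(JX,JY) + Φ(KX,KY)`. -/
def Lop {V : Type*} [AddCommGroup V] [Module ℝ V] (I J K : V →ₗ[ℝ] V)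
    (Φ : V → V → ℝ) : V → V → ℝ :=
  fun X Y => Φ (I X) (I Y) + Φ (J X) (J Y) + Φ (K X) (K Y)

structure IsQuaternionic {R : Type*} [Ring R] (i j k : R) : Prop where
  i_mul_i : i * i = -1
  j_mul_j : j * j = -1
  k_mul_k : k * k = -1
  i_mul_j_mul_k : i * j * k = -1

namespace IsQuaternionic

variable {R : Type*} [Ring R] {i j k : R}

theorem i_mul_j (h : IsQuaternionic i j k) : i * j = k := by
  have := congrArg (· * k) h.i_mul_j_mul_k
  simpa [mul_assoc, h.k_mul_k] using this

theorem j_mul_k (h : IsQuaternionic i j k) : j * k = i := by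
  have := congrArg (i * ·) h.i_mul_j_mul_k
  simpa [← mul_assoc, h.i_mul_i] using this

theorem j_mul_i (h : IsQuaternionic i j k) : j * i = -k := by
  have := congrArg (j * ·) h.j_mul_k
  simpa [← mul_assoc, h.j_mul_j] using this.symm

theorem i_mul_k (h : IsQuaternionic i j k) : i * k = -j := by
  have := congrArg (· * k) h.j_mul_k
  simpa [mul_assoc, h.k_mul_k] using this.symm

theorem k_mul_j (h : IsQuaternionic i j k) : k * j = -i := by
  have := congrArg (· * j) h.i_mul_j
  simpa [mul_assoc, h.j_mul_j] using this.symm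

theorem k_mul_i (h : IsQuaternionic i j k) : k * i = j := by
  have := congrArg (k * ·) h.k_mul_j
  simpa [← mul_assoc, h.k_mul_k] using this.symm

end IsQuaternionic

/-- The nine terms of `L²Φ` are `Φ(ABX, ABY)` for `A, B ∈ {I, J, K}`: the three with `A = B` give
`Φ(-X, -Y) = Φ(X, Y)`, and the six with `A ≠ B` give each term of `LΦ` twice, up to signs that
cancel by bilinearity. -/
theorem IsQuaternionic.Lop_Lop_apply {V : Type*} [AddCommGroup V] [Module ℝ V]
    {I J K : Module.End ℝ V} (hq : IsQuaternionic I J K) (Φ : V →ₗ[ℝ] V →ₗ[ℝ] ℝ)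
    (X Y : V) :
    Lop I J K (Lop I J K (fun a b => Φ a b)) X Y
      = 2 * Lop I J K (fun a b => Φ a b) X Y + 3 * Φ X Y := by
  have apply_apply {A B C : Module.End ℝ V} (h : A * B = C) (x : V) : A (B x) = C x := by
    rw [← h]; rfl
  simp only [Lop, apply_apply hq.i_mul_i, apply_apply hq.j_mul_j, apply_apply hq.k_mul_k,
    apply_apply hq.i_mul_j, apply_apply hq.j_mul_k, apply_apply hq.k_mul_i,
    apply_apply hq.j_mul_i, apply_apply hq.k_mul_j, apply_apply hq.i_mul_k,
    LinearMap.neg_apply, Module.End.one_apply, map_neg, neg_neg]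
  ring

theorem Lop_sq_eq_two_Lop_add_three_general {V : Type*} [NormedAddCommGroup V]
    [InnerProductSpace ℝ V]
    (I J K : V →ₗ[ℝ] V)
    (hI2 : ∀ x : V, I (I x) = -x)
    (hJ2 : ∀ x : V, J (J x) = -x)
    (hK2 : ∀ x : V, K (K x) = -x)
    (hIJK : ∀ x : V, I (J (K x)) = -x)
    (Φ : V →ₗ[ℝ] V →ₗ[ℝ] ℝ) :
    ∀ X Y : V,
      Lop I J K (Lop I J K (fun a b => Φ a b)) X Y
        = 2 * Lop I J K (fun a b => Φ a b) X Y + 3 * Φ X Y :=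
  IsQuaternionic.Lop_Lop_apply
    ⟨LinearMap.ext hI2, LinearMap.ext hJ2, LinearMap.ext hK2, LinearMap.ext hIJK⟩ Φ

/-- for orthogonal `I, J, K` satisfying the quaternionic identities
`I² = J² = K² = -1 = IJK`, the operator `L` on bilinear forms satisfies `L² = 2L + 3`. -/
theorem Lop_sq_eq_two_Lop_add_three {V : Type*} [NormedAddCommGroup V]
    [InnerProductSpace ℝ V] [FiniteDimensional ℝ V]
    (I J K : V →ₗ[ℝ] V)
    (hIorth : ∀ x y : V, (inner ℝ (I x) (I y) : ℝ) = inner ℝ x y)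
    (hJorth : ∀ x y : V, (inner ℝ (J x) (J y) : ℝ) = inner ℝ x y)
    (hKorth : ∀ x y : V, (inner ℝ (K x) (K y) : ℝ) = inner ℝ x y)
    (hI2 : ∀ x : V, I (I x) = -x)
    (hJ2 : ∀ x : V, J (J x) = -x)
    (hK2 : ∀ x : V, K (K x) = -x)
    (hIJK : ∀ x : V, I (J (K x)) = -x)
    (Φ : V →ₗ[ℝ] V →ₗ[ℝ] ℝ) :
    ∀ X Y : V,
      Lop I J K (Lop I J K (fun a b => Φ a b)) X Y
        = 2 * Lop I J K (fun a b => Φ a b) X Y + 3 * Φ X Y :=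
  Lop_sq_eq_two_Lop_add_three_general I J K hI2 hJ2 hK2 hIJK Φ
end

section
/- The only eigenvalues of the operator L on bilinear forms are 3 and -1, and the space of bilinear forms decomposes as the direct sum of the corresponding eigenspaces. -/
/-- the only eigenvalues of `L` on bilinear forms are `3` and `-1`, and the
space of bilinear forms is the direct sum of the two eigenspaces (every bilinear form
decomposes uniquely as a sum of an eigenvector for `3` and an eigenvector for `-1`). -/
theorem Lop_eigenvalues_and_decomposition {V : Type*} [AddCommGroup V] [Module ℝ V]
    (I J K : V →ₗ[ℝ] V)
    (hI2 : ∀ x : V, I (I x) = -x)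
    (hJ2 : ∀ x : V, J (J x) = -x)
    (hK2 : ∀ x : V, K (K x) = -x)
    (hIJK : ∀ x : V, I (J (K x)) = -x) :
    (∀ μ : ℝ,
      (∃ Φ : V →ₗ[ℝ] V →ₗ[ℝ] ℝ, (∃ X Y : V, Φ X Y ≠ 0) ∧
        ∀ X Y : V, Lop I J K (fun a b => Φ a b) X Y = μ * Φ X Y) →
      μ = 3 ∨ μ = -1) ∧
    (∀ Φ : V →ₗ[ℝ] V →ₗ[ℝ] ℝ,
      ∃! p : (V →ₗ[ℝ] V →ₗ[ℝ] ℝ) × (V →ₗ[ℝ] V →ₗ[ℝ] ℝ),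
        Φ = p.1 + p.2 ∧
        (∀ X Y : V, Lop I J K (fun a b => p.1 a b) X Y = 3 * p.1 X Y) ∧
        (∀ X Y : V, Lop I J K (fun a b => p.2 a b) X Y = - p.2 X Y)) := by
  -- quaternion multiplication relations
  have hJinj : ∀ a b : V, J a = J b → a = b := by
    intro a b h
    have h2 := congrArg J h
    rw [hJ2, hJ2] at h2
    exact neg_injective h2
  have hJK : ∀ x : V, J (K x) = I x := by
    intro x
    have h1 := congrArg I (hIJK x)
    rw [hI2, map_neg] at h1
    exact neg_injective h1
  have hKI : ∀ x : V, K (I x) = J x := by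
    intro x
    apply hJinj
    rw [hJK, hI2, hJ2]
  have hIJ : ∀ x : V, I (J x) = K x := by
    intro x
    have h1 := hIJK (K x)
    rw [hK2, map_neg, map_neg] at h1
    exact neg_injective h1
  have hJI : ∀ x : V, J (I x) = -K x := by
    intro x
    rw [← hJK x, hJ2]
  have hKJ : ∀ x : V, K (J x) = -I x := by
    intro x
    apply hJinj
    rw [hJK, hIJ, map_neg, hJI, neg_neg]
  have hIK : ∀ x : V, I (K x) = -J x := by
    intro x
    rw [← hIJ x, hI2]
  -- the key identity L² = 3 + 2L, pointwise
  have key : ∀ (Φ : V →ₗ[ℝ] V →ₗ[ℝ] ℝ) (X Y : V),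
      Lop I J K (fun a b => Lop I J K (fun a b => Φ a b) a b) X Y
        = 3 * Φ X Y + 2 * Lop I J K (fun a b => Φ a b) X Y := by
    intro Φ X Y
    simp only [Lop, hI2, hJ2, hK2, hJK, hKI, hIJ, hJI, hKJ, hIK, map_neg,
      LinearMap.neg_apply, neg_neg]
    ring
  constructor
  · rintro μ ⟨Φ, ⟨X, Y, hXY⟩, heig⟩
    have h1 : Lop I J K (fun a b => Lop I J K (fun a b => Φ a b) a b) X Y
        = μ * (μ * Φ X Y) := by
      simp only [Lop] at heig ⊢
      rw [heig, heig, heig, ← mul_add, ← mul_add, heig]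
    rw [key, heig] at h1
    have h2 : (μ - 3) * (μ + 1) * Φ X Y = 0 := by linarith [h1]
    rcases mul_eq_zero.mp h2 with h3 | h3
    · rcases mul_eq_zero.mp h3 with h4 | h4
      · left; linarith
      · right; linarith
    · exact absurd h3 hXY
  · intro Φ
    set LΦ : V →ₗ[ℝ] V →ₗ[ℝ] ℝ :=
      Φ.compl₁₂ I I + Φ.compl₁₂ J J + Φ.compl₁₂ K K with hLΦ
    have hLΦ_apply : ∀ X Y : V, LΦ X Y = Lop I J K (fun a b => Φ a b) X Y := by
      intro X Y
      simp [hLΦ, Lop, LinearMap.compl₁₂_apply]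
    refine ⟨((4:ℝ)⁻¹ • (LΦ + Φ), (4:ℝ)⁻¹ • ((3:ℝ) • Φ - LΦ)), ⟨?_, ?_, ?_⟩, ?_⟩
    · ext X Y
      simp only [LinearMap.add_apply, LinearMap.smul_apply, LinearMap.sub_apply,
        smul_eq_mul]
      ring
    · intro X Y
      have hk := key Φ X Y
      simp only [Lop, LinearMap.add_apply, LinearMap.smul_apply, smul_eq_mul,
        hLΦ_apply] at *
      linarith
    · intro X Y
      have hk := key Φ X Y
      simp only [Lop, LinearMap.sub_apply, LinearMap.smul_apply, smul_eq_mul,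
        hLΦ_apply] at *
      linarith
    · rintro ⟨q1, q2⟩ ⟨hsum, h3q, hnq⟩
      have hq1 : ∀ X Y : V, q1 X Y = (4:ℝ)⁻¹ * (LΦ X Y + Φ X Y) := by
        intro X Y
        have hs : Φ X Y = q1 X Y + q2 X Y := by rw [hsum]; rfl
        have hL : LΦ X Y = 3 * q1 X Y - q2 X Y := by
          rw [hLΦ_apply]
          have : Lop I J K (fun a b => Φ a b) X Y
              = Lop I J K (fun a b => q1 a b) X Y + Lop I J K (fun a b => q2 a b) X Y := by
            simp only [Lop, hsum, LinearMap.add_apply]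
            ring
          rw [this, h3q X Y, hnq X Y]
          ring
        linarith
      have hq2 : ∀ X Y : V, q2 X Y = (4:ℝ)⁻¹ * (3 * Φ X Y - LΦ X Y) := by
        intro X Y
        have hs : Φ X Y = q1 X Y + q2 X Y := by rw [hsum]; rfl
        have := hq1 X Y
        linarith
      refine Prod.ext ?_ ?_
      · ext X Y
        simp only [LinearMap.add_apply, LinearMap.smul_apply, smul_eq_mul, hq1 X Y]
      · ext X Y
        simp only [LinearMap.sub_apply, LinearMap.smul_apply, smul_eq_mul, hq2 X Y]
end

section
/- Let h : ℝ → ℝ be a differentiable function satisfying h'(t) = -(1/2)(h(t)² + ν) for all t ∈ ℝ, where ν is a real constant. If h(t)² + ν > 0 for all t, then no such h defined on all of ℝ exists; and if h(t₀)² + ν < 0 at some point, then h vanishes at some point. In particular, a solution defined on all of ℝ that never vanishes must satisfy h² + ν ≡ 0. -/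
/-!
Write `ν ≥ -c²` with `c ≥ 0`. Where `h > c`, `h' < 0`, so a solution above `c` at some time stays
above `c` at all earlier times; there `(h - c)' ≤ -(h - c)² / 2`, i.e. `1 / (h - c)` decreases at
rate at least `1/2` going backwards and would have to become negative. Hence a solution defined on
all of `ℝ` stays `≤ c`, and so does the reflected solution `-h(-t)`: `|h| ≤ c`, so `h² + ν ≤ 0`
(for `ν > 0` take `c = 0`: then `h ≡ 0`, which is not a solution). Consequently `h` is
nondecreasing, and if `0 < h t₀` with `h t₀ ² + ν < 0`, then while `h` stays positive in the past its
slope is at least `-(h t₀ ² + ν) / 2 > 0`, so it must reach `0`.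
-/

open Set

theorem lt_of_le_of_forall_hasDerivAt_neg {f f' : ℝ → ℝ} {a b c : ℝ}
    (hf : ∀ t ∈ Icc a b, HasDerivAt f (f' t) t) (hf' : ∀ t ∈ Icc a b, c < f t → f' t < 0)
    (hab : a ≤ b) (hb : c < f b) : c < f a := by
  by_contra! ha
  have hcont : ContinuousOn f (Icc a b) := fun t ht => (hf t ht).continuousAt.continuousWithinAt
  have hS : IsCompact (Icc a b ∩ f ⁻¹' Iic c) :=
    isCompact_Icc.of_isClosed_subset
      (hcont.preimage_isClosed_of_isClosed isClosed_Icc isClosed_Iic) inter_subset_left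
  -- the last time `u` before `b` at which `f ≤ c`; on `(u, b]` the function is decreasing
  obtain ⟨u, ⟨hu, hfu⟩, hmax⟩ := hS.exists_isGreatest ⟨a, left_mem_Icc.2 hab, ha⟩
  have hub : u < b := hu.2.lt_of_ne (by rintro rfl; exact hfu.not_gt hb)
  have habove : ∀ t ∈ Ioo u b, c < f t := fun t ht =>
    not_le.1 fun hle => ht.1.not_ge (hmax ⟨⟨hu.1.trans ht.1.le, ht.2.le⟩, hle⟩)
  have hsub : Icc u b ⊆ Icc a b := Icc_subset_Icc_left hu.1
  have hanti : StrictAntiOn f (Icc u b) := by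
    refine strictAntiOn_of_hasDerivWithinAt_neg (f' := f') (convex_Icc u b) (hcont.mono hsub)
      (fun t ht => ?_) (fun t ht => ?_) <;> rw [interior_Icc] at ht
    · exact (hf t (hsub (Ioo_subset_Icc_self ht))).hasDerivWithinAt
    · exact hf' t (hsub (Ioo_subset_Icc_self ht)) (habove t ht)
  exact hfu.not_gt (hb.trans (hanti (left_mem_Icc.2 hub.le) (right_mem_Icc.2 hub.le) hub))

theorem not_forall_pos_of_pos_le_hasDerivAt {f f' : ℝ → ℝ} {b k : ℝ} (hk : 0 < k)
    (hf : ∀ t ≤ b, HasDerivAt f (f' t) t) (hf' : ∀ t ≤ b, k ≤ f' t) : ¬ ∀ t ≤ b, 0 < f t := by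
  intro hpos
  set s := b - f b / k - 1
  have hsb : s ≤ b := by
    have : 0 < f b / k := div_pos (hpos b le_rfl) hk
    linarith
  have hgrowth : k * (b - s) ≤ f b - f s := by
    refine (convex_Iic b).mul_sub_le_image_sub_of_le_deriv
      (fun t ht => (hf t ht).continuousAt.continuousWithinAt)
      (fun t ht => ?_) (fun t ht => ?_) s hsb b (le_refl b) hsb <;> rw [interior_Iic] at ht
    · exact (hf t ht.le).differentiableAt.differentiableWithinAt
    · exact (hf t ht.le).deriv ▸ hf' t ht.le
  have hks : k * (b - s) = f b + k := by
    simp only [s]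
    field_simp
    ring
  linarith [hpos s hsb]

theorem not_forall_pos_of_hasDerivAt_le_neg_mul_sq {f f' : ℝ → ℝ} {b k : ℝ} (hk : 0 < k)
    (hf : ∀ t ≤ b, HasDerivAt f (f' t) t) (hf' : ∀ t ≤ b, f' t ≤ -k * f t ^ 2) :
    ¬ ∀ t ≤ b, 0 < f t := by
  intro hpos
  refine not_forall_pos_of_pos_le_hasDerivAt hk (f := fun t => (f t)⁻¹)
    (fun t ht => (hf t ht).inv (hpos t ht).ne') (fun t ht => ?_)
    (fun t ht => inv_pos.2 (hpos t ht))
  have := hpos t ht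
  rw [le_div_iff₀ (by positivity)]
  linarith [hf' t ht]

def IsRiccatiSolution (ν : ℝ) (h : ℝ → ℝ) : Prop :=
  ∀ t, HasDerivAt h (-(1/2) * (h t ^ 2 + ν)) t

namespace IsRiccatiSolution

variable {ν : ℝ} {h : ℝ → ℝ}

theorem reflect (hh : IsRiccatiSolution ν h) : IsRiccatiSolution ν (fun t => -h (-t)) :=
  fun t => (((hh (-t)).comp t (hasDerivAt_neg t)).neg).congr_deriv (by ring)

theorem continuous (hh : IsRiccatiSolution ν h) : Continuous h :=
  continuous_iff_continuousAt.2 fun t => (hh t).continuousAt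

theorem le_of_neg_sq_le (hh : IsRiccatiSolution ν h) {c : ℝ} (hc : 0 ≤ c) (hν : -c ^ 2 ≤ ν)
    (t : ℝ) : h t ≤ c := by
  by_contra! ht
  have habove : ∀ s ≤ t, c < h s := fun s hs =>
    lt_of_le_of_forall_hasDerivAt_neg (fun r _ => hh r) (fun r _ hr => by nlinarith) hs ht
  refine not_forall_pos_of_hasDerivAt_le_neg_mul_sq one_half_pos (f := fun s => h s - c)
    (fun s _ => (hh s).sub_const c) (fun s hs => ?_) (fun s hs => sub_pos.2 (habove s hs))
  nlinarith [mul_nonneg hc (sub_pos.2 (habove s hs)).le]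

theorem sq_add_nonpos (hh : IsRiccatiSolution ν h) (t : ℝ) : h t ^ 2 + ν ≤ 0 := by
  rcases le_or_gt ν 0 with hν | hν
  · obtain ⟨c, hc, hcν⟩ : ∃ c : ℝ, 0 ≤ c ∧ c ^ 2 = -ν :=
      ⟨√(-ν), Real.sqrt_nonneg _, Real.sq_sqrt (neg_nonneg.2 hν)⟩
    have hup := hh.le_of_neg_sq_le hc (by linarith) t
    have hlow := hh.reflect.le_of_neg_sq_le hc (by linarith) (-t)
    simp only [neg_neg] at hlow
    nlinarith
  · have hzero : h = fun _ => 0 := funext fun t =>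
      le_antisymm (hh.le_of_neg_sq_le le_rfl (by linarith) t)
        (by simpa using hh.reflect.le_of_neg_sq_le le_rfl (by linarith) (-t))
    subst hzero
    have hderiv := (hh 0).unique (hasDerivAt_const 0 0)
    norm_num at hderiv
    linarith

theorem exists_eq_zero_of_pos (hh : IsRiccatiSolution ν h) {t₀ : ℝ} (ht₀ : h t₀ ^ 2 + ν < 0)
    (hpos : 0 < h t₀) : ∃ t, h t = 0 := by
  have hmono : Monotone h :=
    monotone_of_hasDerivAt_nonneg hh fun t => show (0 : ℝ) ≤ _ by nlinarith [hh.sq_add_nonpos t]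
  obtain ⟨s, hs, hs0⟩ : ∃ s ≤ t₀, h s ≤ 0 := by
    by_contra! hpast
    refine not_forall_pos_of_pos_le_hasDerivAt (k := -(1/2) * (h t₀ ^ 2 + ν)) (by linarith)
      (fun s _ => hh s) (fun s hs => ?_) hpast
    nlinarith [hmono hs, hpast s hs]
  obtain ⟨t, -, ht⟩ := intermediate_value_Icc hs hh.continuous.continuousOn ⟨hs0, hpos.le⟩
  exact ⟨t, ht⟩

theorem exists_eq_zero (hh : IsRiccatiSolution ν h) {t₀ : ℝ} (ht₀ : h t₀ ^ 2 + ν < 0) :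
    ∃ t, h t = 0 := by
  rcases lt_trichotomy (h t₀) 0 with hneg | hzero | hpos
  · obtain ⟨t, ht⟩ := hh.reflect.exists_eq_zero_of_pos (t₀ := -t₀)
      (by simpa only [neg_neg, neg_sq] using ht₀) (by simpa only [neg_neg, neg_pos] using hneg)
    exact ⟨-t, neg_eq_zero.1 ht⟩
  · exact ⟨t₀, hzero⟩
  · exact hh.exists_eq_zero_of_pos ht₀ hpos

end IsRiccatiSolution

/-- for the ODE `h' = -(1/2)(h² + ν)` on all of `ℝ`:
no global solution has `h² + ν > 0` everywhere; a solution with `h(t₀)² + ν < 0` somewhere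
vanishes at some point; hence a global nowhere-vanishing solution satisfies `h² + ν ≡ 0`. -/
theorem riccati_global_solution (ν : ℝ) (h : ℝ → ℝ)
    (hderiv : ∀ t : ℝ, HasDerivAt h (-(1/2) * (h t ^ 2 + ν)) t) :
    (¬ ∀ t : ℝ, 0 < h t ^ 2 + ν) ∧
    ((∃ t₀ : ℝ, h t₀ ^ 2 + ν < 0) → ∃ t : ℝ, h t = 0) ∧
    ((∀ t : ℝ, h t ≠ 0) → ∀ t : ℝ, h t ^ 2 + ν = 0) := by
  have hh : IsRiccatiSolution ν h := hderiv
  refine ⟨fun hpos => (hpos 0).not_ge (hh.sq_add_nonpos 0),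
    fun ⟨_, ht₀⟩ => hh.exists_eq_zero ht₀, fun hne t => ?_⟩
  refine (hh.sq_add_nonpos t).antisymm (not_lt.1 fun hlt => ?_)
  obtain ⟨s, hs⟩ := hh.exists_eq_zero hlt
  exact hne s hs
end

section
/- On a Riemannian manifold, if a 1-form φ satisfies ∇φ = (1/2)((-1 + L)(φ⊗φ) - νg) where L is induced by a parallel almost hypercomplex structure, then the dual vector field ξ = φ^♯ satisfies ∇_ξ ξ = -(1/2)(|φ|² + ν)ξ. -/
/-! Each of `I, J, K` is orthogonal with square `-1`, hence skew-adjoint, so `ξ ⟂ Iξ, Jξ, Kξ`,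
i.e. `φ(Iξ) = φ(Jξ) = φ(Kξ) = 0`. Evaluated at `X = ξ`, the quaternionic terms of `∇φ` therefore
vanish and `(∇_ξ φ)(Y) = (1/2)(-φ(ξ)φ(Y) - ν g(ξ, Y)) = -(1/2)(|φ|² + ν) g(ξ, Y)`. -/

theorem real_inner_self_apply_eq_zero_of_sq_eq_neg {V : Type*} [NormedAddCommGroup V]
    [InnerProductSpace ℝ V] (A : V →ₗ[ℝ] V)
    (hA : ∀ x y : V, (inner ℝ (A x) (A y) : ℝ) = inner ℝ x y) (hA2 : ∀ x : V, A (A x) = -x)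
    (x : V) : (inner ℝ x (A x) : ℝ) = 0 := by
  have h : (inner ℝ x (A x) : ℝ) = -inner ℝ x (A x) := by
    calc (inner ℝ x (A x) : ℝ) = inner ℝ (A x) (A (A x)) := (hA x (A x)).symm
      _ = -inner ℝ x (A x) := by rw [hA2, inner_neg_right, real_inner_comm]
  linarith

/-- `∇_ξ ξ` is encoded as the vector `η` with `g(η, Y) = (∇_ξ φ)(Y) = B(ξ, Y)` for all `Y`. -/
theorem nabla_xi_xi_general {V : Type*} [NormedAddCommGroup V] [InnerProductSpace ℝ V]
    (I J K : V →ₗ[ℝ] V)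
    (hIorth : ∀ x y : V, (inner ℝ (I x) (I y) : ℝ) = inner ℝ x y)
    (hJorth : ∀ x y : V, (inner ℝ (J x) (J y) : ℝ) = inner ℝ x y)
    (hKorth : ∀ x y : V, (inner ℝ (K x) (K y) : ℝ) = inner ℝ x y)
    (hI2 : ∀ x : V, I (I x) = -x)
    (hJ2 : ∀ x : V, J (J x) = -x)
    (hK2 : ∀ x : V, K (K x) = -x)
    (ν : ℝ) (φ : V →ₗ[ℝ] ℝ) (ξ : V) (hξ : ∀ Y : V, (inner ℝ ξ Y : ℝ) = φ Y)
    (B : V → V → ℝ)    -- B = ∇φ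
    (hB : ∀ X Y : V, B X Y = (1/2) * (-(φ X * φ Y)
      + φ (I X) * φ (I Y) + φ (J X) * φ (J Y) + φ (K X) * φ (K Y) - ν * inner ℝ X Y)) :
    ∀ η : V, (∀ Y : V, (inner ℝ η Y : ℝ) = B ξ Y) →
      η = (-(1/2) * ((inner ℝ ξ ξ : ℝ) + ν)) • ξ := by
  intro η hη
  have hI : φ (I ξ) = 0 := by
    rw [← hξ, real_inner_self_apply_eq_zero_of_sq_eq_neg I hIorth hI2]
  have hJ : φ (J ξ) = 0 := by
    rw [← hξ, real_inner_self_apply_eq_zero_of_sq_eq_neg J hJorth hJ2]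
  have hK : φ (K ξ) = 0 := by
    rw [← hξ, real_inner_self_apply_eq_zero_of_sq_eq_neg K hKorth hK2]
  refine ext_inner_right ℝ fun Y => ?_
  rw [hη, hB, hI, hJ, hK, real_inner_smul_left, ← hξ ξ, ← hξ Y]
  ring

/-- pointwise form, the tangent space at a point being the inner product
space `V`: if the 1-form `φ` satisfies `∇φ = (1/2)((-1 + L)(φ⊗φ) - νg)`, then the dual
vector field `ξ = φ^♯` satisfies `∇_ξ ξ = -(1/2)(|φ|² + ν)ξ`.  Here `B = ∇φ`, so that
`∇_ξ ξ` is the vector `η` with `g(η, Y) = (∇_ξ φ)(Y) = B(ξ, Y)` for all `Y`. -/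
theorem nabla_xi_xi {V : Type*} [NormedAddCommGroup V] [InnerProductSpace ℝ V]
    (I J K : V →ₗ[ℝ] V)
    (hIorth : ∀ x y : V, (inner ℝ (I x) (I y) : ℝ) = inner ℝ x y)
    (hJorth : ∀ x y : V, (inner ℝ (J x) (J y) : ℝ) = inner ℝ x y)
    (hKorth : ∀ x y : V, (inner ℝ (K x) (K y) : ℝ) = inner ℝ x y)
    (hI2 : ∀ x : V, I (I x) = -x)
    (hJ2 : ∀ x : V, J (J x) = -x)
    (hK2 : ∀ x : V, K (K x) = -x)
    (hIJK : ∀ x : V, I (J (K x)) = -x)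
    (ν : ℝ) (φ : V →ₗ[ℝ] ℝ) (ξ : V) (hξ : ∀ Y : V, (inner ℝ ξ Y : ℝ) = φ Y)
    (B : V → V → ℝ)    -- B = ∇φ
    (hB : ∀ X Y : V, B X Y = (1/2) * (-(φ X * φ Y)
      + φ (I X) * φ (I Y) + φ (J X) * φ (J Y) + φ (K X) * φ (K Y) - ν * inner ℝ X Y)) :
    ∀ η : V, (∀ Y : V, (inner ℝ η Y : ℝ) = B ξ Y) →
      η = (-(1/2) * ((inner ℝ ξ ξ : ℝ) + ν)) • ξ :=
  nabla_xi_xi_general I J K hIorth hJorth hKorth hI2 hJ2 hK2 ν φ ξ hξ B hB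
end

section
/- Let V be a 4n-dimensional real vector space with I,J,K satisfying the quaternionic identities, n > 1. The map sending a triple of 1-forms (α,β,γ) to α∧Ω_I + β∧Ω_J + γ∧Ω_K ∈ Λ³V* is injective, where Ω_I, Ω_J, Ω_K are the Kähler 2-forms of I,J,K with respect to a compatible inner product. -/
/-!
For `y ≠ 0`, evaluating the 3-form at `(X, y, I y)` shows that `α` vanishes on the orthogonal
complement of the quaternionic line `ℍy = span {y, I y, J y, K y}`. As `dim V > 4` there is a
`z ≠ 0` orthogonal to `ℍy`; then `ℍy ⟂ ℍz`, so `α` also vanishes on `ℍy ⊆ (ℍz)ᗮ`, hence on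
`ℍy ⊔ (ℍy)ᗮ = V`. Permuting `(I, J, K)` and `(α, β, γ)` cyclically gives `β = γ = 0`.
-/

open Module Submodule
open scoped RealInnerProductSpace

section

variable {V : Type*} [NormedAddCommGroup V] [InnerProductSpace ℝ V]

structure IsOrthogonalComplexStructure (f : V →ₗ[ℝ] V) : Prop where
  inner_map_map : ∀ x y, ⟪f x, f y⟫ = ⟪x, y⟫
  map_map : ∀ x, f (f x) = -x

namespace IsOrthogonalComplexStructure

variable {f : V →ₗ[ℝ] V}

theorem inner_map_left (hf : IsOrthogonalComplexStructure f) (x y : V) :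
    ⟪f x, y⟫ = -⟪x, f y⟫ := by
  have h := hf.inner_map_map x (f y)
  rw [hf.map_map, inner_neg_right] at h
  linarith

theorem inner_self_map (hf : IsOrthogonalComplexStructure f) (x : V) : ⟪x, f x⟫ = 0 := by
  have h := hf.inner_map_left x x
  rw [real_inner_comm] at h
  linarith

theorem map_mem_orthogonal (hf : IsOrthogonalComplexStructure f) {W : Submodule ℝ V}
    (hW : ∀ w ∈ W, f w ∈ W) {x : V} (hx : x ∈ Wᗮ) : f x ∈ Wᗮ := by
  intro w hw
  rw [real_inner_comm, hf.inner_map_left, real_inner_comm, hx (f w) (hW w hw), neg_zero]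

end IsOrthogonalComplexStructure

structure IsHyperHermitian (I J K : V →ₗ[ℝ] V) : Prop where
  complex_I : IsOrthogonalComplexStructure I
  complex_J : IsOrthogonalComplexStructure J
  complex_K : IsOrthogonalComplexStructure K
  map_map_map : ∀ x, I (J (K x)) = -x

def quaternionicSpan (I J K : V →ₗ[ℝ] V) (y : V) : Submodule ℝ V :=
  span ℝ {y, I y, J y, K y}

theorem finrank_quaternionicSpan_le (I J K : V →ₗ[ℝ] V) (y : V) :
    finrank ℝ (quaternionicSpan I J K y) ≤ 4 := by
  classical
  have h := finrank_span_finset_le_card (R := ℝ) ({y, I y, J y, K y} : Finset V)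
  simp only [Finset.coe_insert, Finset.coe_singleton] at h
  exact h.trans Finset.card_le_four

theorem quaternionicSpan_cycle (I J K : V →ₗ[ℝ] V) (y : V) :
    quaternionicSpan J K I y = quaternionicSpan I J K y := by
  unfold quaternionicSpan
  congr 1
  ext x
  simp only [Set.mem_insert_iff, Set.mem_singleton_iff]
  tauto

/-- `(α ∧ Ω_I + β ∧ Ω_J + γ ∧ Ω_K)(X, Y, Z)`, where `Ω_I(X, Y) = ⟪I X, Y⟫`. -/
def kaehlerWedge (I J K : V →ₗ[ℝ] V) (α β γ : V →ₗ[ℝ] ℝ) (X Y Z : V) : ℝ :=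
  (α X * ⟪I Y, Z⟫ - α Y * ⟪I X, Z⟫ + α Z * ⟪I X, Y⟫)
    + (β X * ⟪J Y, Z⟫ - β Y * ⟪J X, Z⟫ + β Z * ⟪J X, Y⟫)
    + (γ X * ⟪K Y, Z⟫ - γ Y * ⟪K X, Z⟫ + γ Z * ⟪K X, Y⟫)

theorem kaehlerWedge_cycle (I J K : V →ₗ[ℝ] V) (α β γ : V →ₗ[ℝ] ℝ) (X Y Z : V) :
    kaehlerWedge J K I β γ α X Y Z = kaehlerWedge I J K α β γ X Y Z := by
  unfold kaehlerWedge
  ring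

namespace IsHyperHermitian

variable {I J K : V →ₗ[ℝ] V} {α β γ : V →ₗ[ℝ] ℝ}

theorem J_K (h : IsHyperHermitian I J K) (x : V) : J (K x) = I x := by
  have hx := congrArg I (h.map_map_map x)
  rwa [h.complex_I.map_map, map_neg, neg_inj] at hx

theorem I_J (h : IsHyperHermitian I J K) (x : V) : I (J x) = K x := by
  have hx := h.map_map_map (K x)
  rwa [h.complex_K.map_map, map_neg, map_neg, neg_inj] at hx

theorem I_K (h : IsHyperHermitian I J K) (x : V) : I (K x) = -J x := by
  rw [← h.I_J, h.complex_I.map_map]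

theorem K_I (h : IsHyperHermitian I J K) (x : V) : K (I x) = J x := by
  have hx := congrArg J (h.J_K (I x))
  rwa [h.complex_J.map_map, h.complex_I.map_map, map_neg, neg_inj] at hx

theorem J_I (h : IsHyperHermitian I J K) (x : V) : J (I x) = -K x := by
  rw [← h.J_K, h.complex_J.map_map]

theorem cycle (h : IsHyperHermitian I J K) : IsHyperHermitian J K I :=
  ⟨h.complex_J, h.complex_K, h.complex_I, fun x => by rw [h.K_I, h.complex_J.map_map]⟩

theorem I_mem_quaternionicSpan (h : IsHyperHermitian I J K) {y x : V}
    (hx : x ∈ quaternionicSpan I J K y) : I x ∈ quaternionicSpan I J K y := by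
  have hgen : ({y, I y, J y, K y} : Set V) ⊆ (quaternionicSpan I J K y).comap I := by
    have hmem : ({y, I y, J y, K y} : Set V) ⊆ quaternionicSpan I J K y := subset_span
    simp only [Set.insert_subset_iff, Set.singleton_subset_iff, SetLike.mem_coe, mem_comap,
      h.complex_I.map_map, h.I_J, h.I_K, neg_mem_iff] at hmem ⊢
    tauto
  exact span_le.mpr hgen hx

theorem J_mem_quaternionicSpan (h : IsHyperHermitian I J K) {y x : V}
    (hx : x ∈ quaternionicSpan I J K y) : J x ∈ quaternionicSpan I J K y := by
  rw [← quaternionicSpan_cycle] at hx ⊢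
  exact h.cycle.I_mem_quaternionicSpan hx

theorem K_mem_quaternionicSpan (h : IsHyperHermitian I J K) {y x : V}
    (hx : x ∈ quaternionicSpan I J K y) : K x ∈ quaternionicSpan I J K y := by
  rw [← quaternionicSpan_cycle, ← quaternionicSpan_cycle] at hx ⊢
  exact h.cycle.cycle.I_mem_quaternionicSpan hx

theorem quaternionicSpan_le_orthogonal (h : IsHyperHermitian I J K) {y z : V}
    (hz : z ∈ (quaternionicSpan I J K y)ᗮ) :
    quaternionicSpan I J K y ≤ (quaternionicSpan I J K z)ᗮ := by
  have hgen : {z, I z, J z, K z} ⊆ ((quaternionicSpan I J K y)ᗮ : Set V) := by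
    simp only [Set.insert_subset_iff, Set.singleton_subset_iff, SetLike.mem_coe]
    exact ⟨hz, h.complex_I.map_mem_orthogonal (fun _ => h.I_mem_quaternionicSpan) hz,
      h.complex_J.map_mem_orthogonal (fun _ => h.J_mem_quaternionicSpan) hz,
      h.complex_K.map_mem_orthogonal (fun _ => h.K_mem_quaternionicSpan) hz⟩
  exact isOrtho_iff_le.mp (isOrtho_iff_le.mpr (span_le.mpr hgen)).symm

theorem orthogonal_quaternionicSpan_le_ker (h : IsHyperHermitian I J K)
    (hw : ∀ X Y Z, kaehlerWedge I J K α β γ X Y Z = 0) {y : V} (hy : y ≠ 0) :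
    (quaternionicSpan I J K y)ᗮ ≤ LinearMap.ker α := by
  intro X hX
  have hgen : ∀ v ∈ ({y, I y, J y, K y} : Set V), ⟪X, v⟫ = 0 := fun v hv =>
    (mem_orthogonal' _ X).mp hX v (subset_span hv)
  simp only [Set.mem_insert_iff, Set.mem_singleton_iff, forall_eq_or_imp, forall_eq] at hgen
  obtain ⟨h0, hI, hJ, hK⟩ := hgen
  -- at `(X, y, I y)` every term but `α X * ⟪y, y⟫` vanishes
  have hXy := hw X y (I y)
  simp only [kaehlerWedge, h.complex_I.inner_map_map, h.complex_I.inner_map_left,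
    h.complex_J.inner_map_left, h.complex_K.inner_map_left, h.J_I, h.K_I, inner_neg_right,
    h.complex_J.inner_self_map, h.complex_K.inner_self_map, h0, hI, hJ, hK, neg_zero, mul_zero,
    sub_zero, add_zero] at hXy
  exact (mul_eq_zero.mp hXy).resolve_right (inner_self_ne_zero.mpr hy)

theorem eq_zero_of_kaehlerWedge_eq_zero [FiniteDimensional ℝ V] (h : IsHyperHermitian I J K)
    (hV : 4 < finrank ℝ V) (hw : ∀ X Y Z, kaehlerWedge I J K α β γ X Y Z = 0) : α = 0 := by
  have : Nontrivial V := finrank_pos_iff (R := ℝ).mp (by omega)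
  obtain ⟨y, hy⟩ := exists_ne (0 : V)
  have hperp : (quaternionicSpan I J K y)ᗮ ≠ ⊥ := by
    intro hbot
    have hsum := (quaternionicSpan I J K y).finrank_add_finrank_orthogonal
    rw [hbot, finrank_bot] at hsum
    have hle := finrank_quaternionicSpan_le I J K y
    omega
  obtain ⟨z, hz, hz0⟩ := exists_mem_ne_zero_of_ne_bot hperp
  have hker : quaternionicSpan I J K y ⊔ (quaternionicSpan I J K y)ᗮ ≤ LinearMap.ker α :=
    sup_le
      ((h.quaternionicSpan_le_orthogonal hz).trans (h.orthogonal_quaternionicSpan_le_ker hw hz0))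
      (h.orthogonal_quaternionicSpan_le_ker hw hy)
  rwa [sup_orthogonal_of_hasOrthogonalProjection, top_le_iff, LinearMap.ker_eq_top] at hker

end IsHyperHermitian

end

/-- on a `4n`-dimensional (`n ≥ 2`) inner product space with orthogonal
complex structures `I, J, K` satisfying the quaternionic identities, the map
`(α,β,γ) ↦ α∧Ω_I + β∧Ω_J + γ∧Ω_K` into `Λ³V*` is injective.  The wedge of a 1-form
`α` with a 2-form `Ω` is written out as
`(α∧Ω)(X,Y,Z) = α(X)Ω(Y,Z) - α(Y)Ω(X,Z) + α(Z)Ω(X,Y)`, and `Ω_I(X,Y) = ⟨IX,Y⟩` etc. -/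
theorem wedge_with_kaehler_forms_injective {V : Type*} [NormedAddCommGroup V]
    [InnerProductSpace ℝ V] [FiniteDimensional ℝ V]
    (n : ℕ) (hn : 2 ≤ n) (hdim : Module.finrank ℝ V = 4 * n)
    (I J K : V →ₗ[ℝ] V)
    (hIorth : ∀ x y : V, (inner ℝ (I x) (I y) : ℝ) = inner ℝ x y)
    (hJorth : ∀ x y : V, (inner ℝ (J x) (J y) : ℝ) = inner ℝ x y)
    (hKorth : ∀ x y : V, (inner ℝ (K x) (K y) : ℝ) = inner ℝ x y)
    (hI2 : ∀ x : V, I (I x) = -x)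
    (hJ2 : ∀ x : V, J (J x) = -x)
    (hK2 : ∀ x : V, K (K x) = -x)
    (hIJK : ∀ x : V, I (J (K x)) = -x)
    (α β γ : V →ₗ[ℝ] ℝ)
    (hzero : ∀ X Y Z : V,
      (α X * (inner ℝ (I Y) Z : ℝ) - α Y * (inner ℝ (I X) Z : ℝ) + α Z * (inner ℝ (I X) Y : ℝ))
      + (β X * (inner ℝ (J Y) Z : ℝ) - β Y * (inner ℝ (J X) Z : ℝ) + β Z * (inner ℝ (J X) Y : ℝ))
      + (γ X * (inner ℝ (K Y) Z : ℝ) - γ Y * (inner ℝ (K X) Z : ℝ) + γ Z * (inner ℝ (K X) Y : ℝ))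
        = 0) :
    α = 0 ∧ β = 0 ∧ γ = 0 := by
  have h : IsHyperHermitian I J K := ⟨⟨hIorth, hI2⟩, ⟨hJorth, hJ2⟩, ⟨hKorth, hK2⟩, hIJK⟩
  have hV : 4 < finrank ℝ V := by omega
  have hw : ∀ X Y Z, kaehlerWedge I J K α β γ X Y Z = 0 := hzero
  refine ⟨h.eq_zero_of_kaehlerWedge_eq_zero hV hw, ?_, ?_⟩
  · exact h.cycle.eq_zero_of_kaehlerWedge_eq_zero hV fun X Y Z => by
      rw [kaehlerWedge_cycle, hw]
  · exact h.cycle.cycle.eq_zero_of_kaehlerWedge_eq_zero hV fun X Y Z => by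
      rw [kaehlerWedge_cycle, kaehlerWedge_cycle, hw]
end
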